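/- arXiv:1810.01314 — 4 statements merged into one kernel-verified Lean document; each statement's English description precedes it below -/
import Mathlib

section
/- Pathwise Gronwall bound for perturbed linear-growth integral equations: Let t₀ ∈ [0,1], η ∈ ℝ, k, M ≥ 0, let w : [t₀,1] → ℝ be continuous with w(t₀) = 0, let g : [t₀,1] → ℝ be integrable with |g(u)| ≤ k(1+|x(u)|) + M for almost every u, and let x : [t₀,1] → ℝ be continuous with x(t) = η + ∫_{t₀}^t g(u) du + w(t) for all t ∈ [t₀,1]. Then sup_{t₀ ≤ t ≤ 1} |x(t)|² ≤ (4|η|² + 8k² + 4M² + 4 sup_{t₀ ≤ t ≤ 1} |w(t)|²) · e^{8k²}. -/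
/-!
By the equation and the growth bound, `|x t| ≤ |η| + |w t| + k ∫_{t₀}^t (1 + |x|) + M (t - t₀)`.
Squaring with `(a + b + c + d)² ≤ 4 (a² + b² + c² + d²)` and using Cauchy–Schwarz on an interval
of length at most one, `(∫ (1 + |x|))² ≤ 2 + 2 ∫ |x|²`, gives
`|x t|² ≤ A + 8k² ∫_{t₀}^t |x|²` with `A = 4|η|² + 8k² + 4M² + 4 sup |w|²`.
The integral form of Grönwall's inequality then bounds `|x t|²` by `A e^{8k² (t - t₀)}`.
-/

open MeasureTheory Set Topology

theorem sq_intervalIntegral_le_mul_intervalIntegral_sq {f : ℝ → ℝ} {a b : ℝ} (hab : a ≤ b)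
    (hf : IntervalIntegrable f volume a b)
    (hf_sq : IntervalIntegrable (fun u ↦ f u ^ 2) volume a b) :
    (∫ u in a..b, f u) ^ 2 ≤ (b - a) * ∫ u in a..b, f u ^ 2 := by
  -- the quadratic `c ↦ ∫ (f - c)²` is nonnegative, so its discriminant is not positive
  have hquad : ∀ c : ℝ,
      0 ≤ (b - a) * (c * c) + (-2 * ∫ u in a..b, f u) * c + ∫ u in a..b, f u ^ 2 := by
    intro c
    have hexpand : ∫ u in a..b, (f u - c) ^ 2
        = (b - a) * (c * c) + (-2 * ∫ u in a..b, f u) * c + ∫ u in a..b, f u ^ 2 := by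
      simp_rw [sub_sq]
      rw [intervalIntegral.integral_add (hf_sq.sub (hf.const_mul 2 |>.mul_const c))
          intervalIntegrable_const,
        intervalIntegral.integral_sub hf_sq (hf.const_mul 2 |>.mul_const c),
        intervalIntegral.integral_mul_const, intervalIntegral.integral_const_mul,
        intervalIntegral.integral_const, smul_eq_mul]
      ring
    rw [← hexpand]
    exact intervalIntegral.integral_nonneg hab fun u _ ↦ sq_nonneg _
  have := discrim_le_zero hquad
  rw [discrim] at this
  linarith

theorem hasDerivWithinAt_intervalIntegral_Ici {X : ℝ → ℝ} {a b t : ℝ}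
    (hX : ContinuousOn X (Icc a b)) (ht : t ∈ Ico a b) :
    HasDerivWithinAt (fun s ↦ ∫ u in a..s, X u) (X t) (Ici t) t := by
  have hmem : Icc a b ∈ 𝓝[>] t := Icc_mem_nhdsGT_of_mem ht
  refine intervalIntegral.integral_hasDerivWithinAt_right ?_ ?_ ?_
  · exact (hX.mono (Icc_subset_Icc_right ht.2.le)).intervalIntegrable_of_Icc ht.1
  · exact (hX.stronglyMeasurableAtFilter_nhdsWithin measurableSet_Icc t).filter_mono
      (nhdsWithin_le_of_mem hmem)
  · exact (hX t (Ico_subset_Icc_self ht)).mono_of_mem_nhdsWithin hmem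

theorem le_mul_exp_of_le_add_mul_intervalIntegral {X : ℝ → ℝ} {a b A B : ℝ}
    (hX : ContinuousOn X (Icc a b)) (hB : 0 ≤ B)
    (hle : ∀ t ∈ Icc a b, X t ≤ A + B * ∫ u in a..t, X u) :
    ∀ t ∈ Icc a b, X t ≤ A * Real.exp (B * (t - a)) := by
  set φ : ℝ → ℝ := fun t ↦ ∫ u in a..t, X u
  have hφ_cont : ContinuousOn φ (Icc a b) := by
    rcases le_or_gt a b with hab | hba
    · simpa only [uIcc_of_le hab] using intervalIntegral.continuousOn_primitive_interval
        (μ := volume) (hX.integrableOn_Icc.mono_set (uIcc_of_le hab).subset)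
    · simp [Icc_eq_empty_of_lt hba]
  have hφ_le : ∀ t ∈ Icc a b, φ t ≤ gronwallBound 0 B A (t - a) :=
    le_gronwallBound_of_liminf_deriv_right_le hφ_cont
      (fun t ht _ hr ↦ (hasDerivWithinAt_intervalIntegral_Ici hX ht).liminf_right_slope_le hr)
      (by simp [φ]) fun t ht ↦ by linarith [hle t (Ico_subset_Icc_self ht)]
  intro t ht
  calc X t ≤ A + B * φ t := hle t ht
    _ ≤ A + B * gronwallBound 0 B A (t - a) := by gcongr; exact hφ_le t ht
    _ = A * Real.exp (B * (t - a)) := by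
      rcases hB.eq_or_lt with rfl | hBpos
      · simp
      · rw [gronwallBound_of_K_ne_0 hBpos.ne']
        field_simp
        ring

theorem abs_intervalIntegral_le_of_abs_le_linear {g x : ℝ → ℝ} {a t k M : ℝ} (hat : a ≤ t)
    (hx : ContinuousOn x (Icc a t))
    (hg : ∀ᵐ u ∂(volume.restrict (Icc a t)), |g u| ≤ k * (1 + |x u|) + M) :
    |∫ u in a..t, g u| ≤ k * (∫ u in a..t, 1 + |x u|) + M * (t - a) := by
  have hbound_int : IntervalIntegrable (fun u ↦ 1 + |x u|) volume a t :=
    (continuousOn_const.add hx.abs).intervalIntegrable_of_Icc hat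
  have hg' : ∀ᵐ u, u ∈ Ioc a t → ‖g u‖ ≤ k * (1 + |x u|) + M := by
    filter_upwards [(ae_restrict_iff' measurableSet_Icc).mp hg] with u hu hu_mem
    exact hu (Ioc_subset_Icc_self hu_mem)
  calc |∫ u in a..t, g u|
      ≤ ∫ u in a..t, k * (1 + |x u|) + M :=
        intervalIntegral.norm_integral_le_of_norm_le hat hg'
          ((hbound_int.const_mul k).add intervalIntegrable_const)
    _ = k * (∫ u in a..t, 1 + |x u|) + M * (t - a) := by
      rw [intervalIntegral.integral_add (hbound_int.const_mul k) intervalIntegrable_const,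
        intervalIntegral.integral_const_mul, intervalIntegral.integral_const, smul_eq_mul,
        mul_comm (t - a) M]

theorem sq_intervalIntegral_one_add_abs_le {x : ℝ → ℝ} {a t : ℝ} (hat : a ≤ t) (ht : t - a ≤ 1)
    (hx : ContinuousOn x (Icc a t)) :
    (∫ u in a..t, 1 + |x u|) ^ 2 ≤ 2 + 2 * ∫ u in a..t, |x u| ^ 2 := by
  have h1 : ContinuousOn (fun u ↦ 1 + |x u|) (Icc a t) := continuousOn_const.add hx.abs
  have hsq : IntervalIntegrable (fun u ↦ |x u| ^ 2) volume a t :=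
    (hx.abs.pow 2).intervalIntegrable_of_Icc hat
  calc (∫ u in a..t, 1 + |x u|) ^ 2
      ≤ (t - a) * ∫ u in a..t, (1 + |x u|) ^ 2 :=
        sq_intervalIntegral_le_mul_intervalIntegral_sq hat (h1.intervalIntegrable_of_Icc hat)
          ((h1.pow 2).intervalIntegrable_of_Icc hat)
    _ ≤ ∫ u in a..t, (1 + |x u|) ^ 2 :=
        mul_le_of_le_one_left (intervalIntegral.integral_nonneg hat fun u _ ↦ sq_nonneg _) ht
    _ ≤ ∫ u in a..t, 2 + 2 * |x u| ^ 2 :=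
        intervalIntegral.integral_mono_on hat ((h1.pow 2).intervalIntegrable_of_Icc hat)
          (intervalIntegrable_const.add (hsq.const_mul 2)) fun u _ ↦ by
            simpa [mul_add] using add_sq_le (a := (1 : ℝ)) (b := |x u|)
    _ = 2 * (t - a) + 2 * ∫ u in a..t, |x u| ^ 2 := by
      rw [intervalIntegral.integral_add intervalIntegrable_const (hsq.const_mul 2),
        intervalIntegral.integral_const_mul, intervalIntegral.integral_const, smul_eq_mul,
        mul_comm (t - a) 2]
    _ ≤ 2 + 2 * ∫ u in a..t, |x u| ^ 2 := by linarith

theorem sq_abs_le_of_eq_add_intervalIntegral {g x w : ℝ → ℝ} {a t η k M : ℝ} (hat : a ≤ t)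
    (ht : t - a ≤ 1) (hx : ContinuousOn x (Icc a t))
    (hg : ∀ᵐ u ∂(volume.restrict (Icc a t)), |g u| ≤ k * (1 + |x u|) + M)
    (heq : x t = η + (∫ u in a..t, g u) + w t) :
    |x t| ^ 2 ≤ 4 * |η| ^ 2 + 8 * k ^ 2 + 4 * M ^ 2 + 4 * |w t| ^ 2
      + 8 * k ^ 2 * ∫ u in a..t, |x u| ^ 2 := by
  set P := ∫ u in a..t, 1 + |x u|
  have habs : |x t| ≤ |η| + |w t| + (k * P + M * (t - a)) := by
    have := abs_intervalIntegral_le_of_abs_le_linear hat hx hg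
    rw [heq]
    linarith [abs_add_three η (∫ u in a..t, g u) (w t)]
  have hP : (k * P) ^ 2 ≤ k ^ 2 * (2 + 2 * ∫ u in a..t, |x u| ^ 2) := by
    rw [mul_pow]
    exact mul_le_mul_of_nonneg_left (sq_intervalIntegral_one_add_abs_le hat ht hx) (sq_nonneg k)
  have hM : (M * (t - a)) ^ 2 ≤ M ^ 2 := by
    rw [mul_pow]
    exact mul_le_of_le_one_right (sq_nonneg M) (pow_le_one₀ (sub_nonneg.mpr hat) ht)
  calc |x t| ^ 2 ≤ (|η| + |w t| + (k * P + M * (t - a))) ^ 2 :=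
        pow_le_pow_left₀ (abs_nonneg _) habs 2
    _ ≤ 4 * (|η| ^ 2 + |w t| ^ 2 + (k * P) ^ 2 + (M * (t - a)) ^ 2) := by
      nlinarith [add_sq_le (a := |η|) (b := |w t|), add_sq_le (a := k * P) (b := M * (t - a)),
        add_sq_le (a := |η| + |w t|) (b := k * P + M * (t - a))]
    _ ≤ _ := by linarith

theorem pathwise_gronwall_bound_general
    (t₀ : ℝ) (ht₀ : t₀ ∈ Icc (0 : ℝ) 1) (η k M : ℝ)
    (w : ℝ → ℝ) (hw : ContinuousOn w (Icc t₀ 1))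
    (g : ℝ → ℝ)
    (x : ℝ → ℝ) (hx : ContinuousOn x (Icc t₀ 1))
    (hg : ∀ᵐ u ∂(volume.restrict (Icc t₀ 1)), |g u| ≤ k * (1 + |x u|) + M)
    (heq : ∀ t ∈ Icc t₀ 1, x t = η + (∫ u in t₀..t, g u) + w t) :
    (⨆ t : Icc t₀ 1, |x (t : ℝ)| ^ 2) ≤
      (4 * |η| ^ 2 + 8 * k ^ 2 + 4 * M ^ 2 + 4 * ⨆ t : Icc t₀ 1, |w (t : ℝ)| ^ 2) *
        Real.exp (8 * k ^ 2) := by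
  set S := ⨆ t : Icc t₀ 1, |w (t : ℝ)| ^ 2
  have hS : ∀ t ∈ Icc t₀ 1, |w t| ^ 2 ≤ S := by
    have hbdd := isCompact_Icc.bddAbove_image (hw.abs.pow 2)
    rw [image_eq_range] at hbdd
    exact fun t ht ↦ le_ciSup hbdd ⟨t, ht⟩
  have hS_nonneg : 0 ≤ S := Real.iSup_nonneg fun _ ↦ sq_nonneg _
  have hbound : ∀ t ∈ Icc t₀ 1, |x t| ^ 2 ≤
      (4 * |η| ^ 2 + 8 * k ^ 2 + 4 * M ^ 2 + 4 * S) + 8 * k ^ 2 * ∫ u in t₀..t, |x u| ^ 2 := by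
    intro t ht
    have hsub : Icc t₀ t ⊆ Icc t₀ 1 := Icc_subset_Icc_right ht.2
    have := sq_abs_le_of_eq_add_intervalIntegral ht.1 (by linarith [ht₀.1, ht.2]) (hx.mono hsub)
      (ae_restrict_of_ae_restrict_of_subset hsub hg) (heq t ht)
    linarith [hS t ht]
  have hgronwall := le_mul_exp_of_le_add_mul_intervalIntegral (X := fun u ↦ |x u| ^ 2)
    (hx.abs.pow 2) (by positivity) hbound
  refine Real.iSup_le (fun ⟨t, ht⟩ ↦ (hgronwall t ht).trans ?_) (by positivity)
  gcongr _ * Real.exp ?_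
  exact mul_le_of_le_one_right (by positivity) (by linarith [ht₀.1, ht.2])

/-- **Pathwise Gronwall bound for perturbed linear-growth integral equations.**
If `x t = η + ∫_{t₀}^t g(u) du + w t` on `[t₀,1]`, with `|g u| ≤ k (1 + |x u|) + M` a.e.,
`w` continuous with `w t₀ = 0`, then
`sup_{t₀ ≤ t ≤ 1} |x t|² ≤ (4|η|² + 8k² + 4M² + 4 sup |w|²) e^{8k²}`. -/
theorem pathwise_gronwall_bound
    (t₀ : ℝ) (ht₀ : t₀ ∈ Icc (0 : ℝ) 1) (η k M : ℝ) (hk : 0 ≤ k) (hM : 0 ≤ M)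
    (w : ℝ → ℝ) (hw : ContinuousOn w (Icc t₀ 1)) (hw0 : w t₀ = 0)
    (g : ℝ → ℝ) (hgint : IntegrableOn g (Icc t₀ 1))
    (x : ℝ → ℝ) (hx : ContinuousOn x (Icc t₀ 1))
    (hg : ∀ᵐ u ∂(volume.restrict (Icc t₀ 1)), |g u| ≤ k * (1 + |x u|) + M)
    (heq : ∀ t ∈ Icc t₀ 1, x t = η + (∫ u in t₀..t, g u) + w t) :
    (⨆ t : Icc t₀ 1, |x (t : ℝ)| ^ 2) ≤
      (4 * |η| ^ 2 + 8 * k ^ 2 + 4 * M ^ 2 + 4 * ⨆ t : Icc t₀ 1, |w (t : ℝ)| ^ 2) *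
        Real.exp (8 * k ^ 2) :=
  pathwise_gronwall_bound_general t₀ ht₀ η k M w hw g x hx hg heq
end

section
/- Exponential moment of the Brownian quadratic functional ∫₀^T B_s²/s ds: Let B be a standard one-dimensional Brownian motion, T > 0 and k > 0 with 2kT < 1. Then E[exp(k ∫₀^T B_s²/s ds)] ≤ Σ_{n=0}^∞ (kT)^n · (2n)!/(2^n (n!)²), and this series converges, so the left-hand side is finite. -/
open MeasureTheory ProbabilityTheory Set

/-- A standard one-dimensional Brownian motion: continuous paths, `B 0 = 0`,
Gaussian increments `B t - B s ~ N(0, t - s)`, and independent increments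
over disjoint intervals. -/
structure IsStdBrownianMotion {Ω : Type*} [MeasurableSpace Ω] (P : Measure Ω)
    (B : ℝ → Ω → ℝ) : Prop where
  init : ∀ ω, B 0 ω = 0
  cont : ∀ ω, Continuous fun t => B t ω
  meas : ∀ t, Measurable (B t)
  gauss : ∀ s t : ℝ, 0 ≤ s → s ≤ t →
    P.map (fun ω => B t ω - B s ω) = gaussianReal 0 (t - s).toNNReal
  indep : ∀ s t u v : ℝ, 0 ≤ s → s ≤ t → t ≤ u → u ≤ v →
    IndepFun (fun ω => B t ω - B s ω) (fun ω => B v ω - B u ω) P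

/-!
Expand `exp (k X) = ∑ kⁿ Xⁿ / n!` and integrate term by term (Tonelli). By Hölder on `(0, T]`,
`(∫₀ᵀ B_s² / s ds)ⁿ ≤ Tⁿ⁻¹ ∫₀ᵀ (B_s² / s)ⁿ ds`, and `B_s² / s` is the square of a standard
Gaussian, whose `n`-th moment is `(2n)! / (2ⁿ n!)`. Hence the `n`-th term is at most
`(kT)ⁿ (2n)! / (2ⁿ (n!)²) = (kT / 2)ⁿ C(2n, n) ≤ (2kT)ⁿ`, a convergent geometric bound.
-/

open Real Filter Nat
open scoped ENNReal NNReal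

lemma integrable_pow_mul_exp_neg_mul_sq {b : ℝ} (hb : 0 < b) (m : ℕ) :
    Integrable fun x : ℝ => x ^ m * exp (-b * x ^ 2) := by
  simpa [Real.rpow_natCast] using
    integrable_rpow_mul_exp_neg_mul_sq hb (s := m) (by linarith [m.cast_nonneg (α := ℝ)])

/-- The derivative of the integrable `x ^ (m + 1) * exp (-b x²)` integrates to `0`. -/
lemma integral_pow_succ_succ_mul_exp_neg_mul_sq {b : ℝ} (hb : 0 < b) (m : ℕ) :
    ∫ x : ℝ, x ^ (m + 2) * exp (-b * x ^ 2)
      = (m + 1) / (2 * b) * ∫ x : ℝ, x ^ m * exp (-b * x ^ 2) := by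
  have hderiv : ∀ x : ℝ, HasDerivAt (fun x => x ^ (m + 1) * exp (-b * x ^ 2))
      ((m + 1) * (x ^ m * exp (-b * x ^ 2)) - 2 * b * (x ^ (m + 2) * exp (-b * x ^ 2))) x := by
    intro x
    refine ((hasDerivAt_pow (m + 1) x).mul
      ((hasDerivAt_pow 2 x).const_mul (-b)).exp).congr_deriv ?_
    push_cast
    ring
  have hint := integrable_pow_mul_exp_neg_mul_sq hb
  have hzero := integral_eq_zero_of_hasDerivAt_of_integrable hderiv
    (((hint m).const_mul _).sub ((hint (m + 2)).const_mul _)) (hint (m + 1))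
  rw [integral_sub ((hint m).const_mul _) ((hint (m + 2)).const_mul _), integral_const_mul,
    integral_const_mul, sub_eq_zero] at hzero
  rw [div_mul_eq_mul_div, eq_div_iff (by positivity)]
  linarith

lemma integral_pow_two_mul_mul_exp_neg_mul_sq {b : ℝ} (hb : 0 < b) (n : ℕ) :
    ∫ x : ℝ, x ^ (2 * n) * exp (-b * x ^ 2)
      = √(π / b) * (2 * n)! / (n ! * (4 * b) ^ n) := by
  induction n with
  | zero => simpa using integral_gaussian b
  | succ n ih =>
    rw [show 2 * (n + 1) = 2 * n + 2 by ring, integral_pow_succ_succ_mul_exp_neg_mul_sq hb, ih,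
      factorial_succ, factorial_succ, factorial_succ]
    push_cast
    field_simp
    ring

lemma lintegral_pow_two_mul_gaussianReal (v : ℝ≥0) (n : ℕ) :
    ∫⁻ x, ENNReal.ofReal (x ^ (2 * n)) ∂gaussianReal 0 v
      = ENNReal.ofReal ((v : ℝ) ^ n * (2 * n)! / (2 ^ n * n !)) := by
  rcases eq_or_ne v 0 with rfl | hv
  · cases n <;> simp [gaussianReal_zero_var]
  have hv' : (0 : ℝ) < v := by positivity
  have hb : (0 : ℝ) < (2 * (v : ℝ))⁻¹ := by positivity
  have hdensity : ∀ x : ℝ, gaussianPDF 0 v x * ENNReal.ofReal (x ^ (2 * n))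
      = ENNReal.ofReal
          ((√(2 * π * v))⁻¹ * (x ^ (2 * n) * exp (-(2 * (v : ℝ))⁻¹ * x ^ 2))) := by
    intro x
    rw [gaussianPDF, gaussianPDFReal, ← ENNReal.ofReal_mul (by positivity)]
    congr 1
    field_simp
    ring_nf
  rw [gaussianReal_of_var_ne_zero _ hv, lintegral_withDensity_eq_lintegral_mul₀
    (measurable_gaussianPDF _ _).aemeasurable (by fun_prop)]
  simp only [Pi.mul_apply, hdensity]
  rw [← ofReal_integral_eq_lintegral_ofReal
      ((integrable_pow_mul_exp_neg_mul_sq hb (2 * n)).const_mul _)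
      (Eventually.of_forall fun x =>
        mul_nonneg (by positivity) (mul_nonneg ((even_two_mul n).pow_nonneg x) (exp_nonneg _))),
    integral_const_mul, integral_pow_two_mul_mul_exp_neg_mul_sq hb n]
  congr 1
  have hsqrt : √(π / (2 * (v : ℝ))⁻¹) = √(2 * π * v) := by congr 1; field_simp
  rw [hsqrt]
  have hsqrt_pos : 0 < √(2 * π * v) := by positivity
  field_simp
  rw [← mul_pow, div_mul_eq_mul_div, mul_div_mul_right _ _ hv'.ne']
  norm_num

lemma summable_pow_mul_factorial_two_mul_div {x : ℝ} (hx₀ : 0 ≤ x) (hx : 2 * x < 1) :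
    Summable fun n : ℕ => x ^ n * (2 * n)! / (2 ^ n * (n ! : ℝ) ^ 2) := by
  have hterm : ∀ n : ℕ,
      x ^ n * (2 * n)! / (2 ^ n * (n ! : ℝ) ^ 2) = (x / 2) ^ n * centralBinom n := by
    intro n
    rw [centralBinom_eq_two_mul_choose, Nat.cast_choose ℝ (by omega),
      show 2 * n - n = n by omega, div_pow]
    field_simp
  simp only [hterm]
  refine Summable.of_nonneg_of_le (fun n => by positivity) (fun n => ?_)
    (summable_geometric_of_lt_one (by positivity) hx)
  calc (x / 2) ^ n * centralBinom n ≤ (x / 2) ^ n * 4 ^ n := by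
        gcongr
        exact_mod_cast centralBinom_le_four_pow n
    _ = (2 * x) ^ n := by rw [← mul_pow]; congr 1; ring

lemma ENNReal.ofReal_exp_eq_tsum {x : ℝ} (hx : 0 ≤ x) :
    ENNReal.ofReal (exp x) = ∑' n : ℕ, ENNReal.ofReal (x ^ n / n !) := by
  rw [exp_eq_exp_ℝ, NormedSpace.exp_eq_tsum_div,
    ENNReal.ofReal_tsum_of_nonneg (fun n => by positivity) (summable_pow_div_factorial x)]

lemma ENNReal.ofReal_exp_mul_le_tsum {k x : ℝ} {y : ℝ≥0∞} (hk : 0 ≤ k) (hx : 0 ≤ x)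
    (hxy : ENNReal.ofReal x ≤ y) :
    ENNReal.ofReal (exp (k * x)) ≤ ∑' n : ℕ, ENNReal.ofReal (k ^ n / n !) * y ^ n := by
  rw [ENNReal.ofReal_exp_eq_tsum (mul_nonneg hk hx)]
  gcongr with n
  rw [mul_pow, mul_div_right_comm, ENNReal.ofReal_mul (by positivity), ENNReal.ofReal_pow hx]
  gcongr

lemma ofReal_integral_le_lintegral_ofReal {α : Type*} [MeasurableSpace α] {μ : Measure α}
    {f : α → ℝ} (hf : 0 ≤ᵐ[μ] f) :
    ENNReal.ofReal (∫ x, f x ∂μ) ≤ ∫⁻ x, ENNReal.ofReal (f x) ∂μ :=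
  calc ENNReal.ofReal (∫ x, f x ∂μ) ≤ ‖∫ x, f x ∂μ‖ₑ := by
        rw [Real.enorm_eq_ofReal_abs]
        exact ENNReal.ofReal_le_ofReal (le_abs_self _)
    _ ≤ ∫⁻ x, ‖f x‖ₑ ∂μ := enorm_integral_le_lintegral_enorm f
    _ = ∫⁻ x, ENNReal.ofReal (f x) ∂μ :=
        lintegral_congr_ae (hf.mono fun x hx => Real.enorm_eq_ofReal hx)

section Holder

variable {α β : Type*} [MeasurableSpace α] [MeasurableSpace β]

/-- Hölder's inequality against the constant `1`, with exponents `n + 1` and `(n + 1) / n`. -/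
lemma pow_succ_lintegral_le {μ : Measure α} {f : α → ℝ≥0∞} (hf : AEMeasurable f μ)
    (n : ℕ) :
    (∫⁻ x, f x ∂μ) ^ (n + 1) ≤ μ univ ^ n * ∫⁻ x, f x ^ (n + 1) ∂μ := by
  rcases Nat.eq_zero_or_pos n with rfl | hn
  · simp
  set p : ℝ := n + 1
  have hp : 1 < p := by simp [p, hn]
  have hholder := ENNReal.lintegral_mul_le_Lp_mul_Lq μ (Real.HolderConjugate.conjExponent hp) hf
    (aemeasurable_const (b := (1 : ℝ≥0∞)))
  simp only [Pi.mul_apply, mul_one, ENNReal.one_rpow, lintegral_const, one_mul] at hholder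
  have hpow := ENNReal.rpow_le_rpow hholder (by positivity : 0 ≤ p)
  rw [ENNReal.mul_rpow_of_nonneg _ _ (by positivity), ← ENNReal.rpow_mul, ← ENNReal.rpow_mul,
    one_div_mul_cancel (by positivity), ENNReal.rpow_one,
    show 1 / p.conjExponent * p = n by simp only [Real.conjExponent, p]; field_simp; ring] at hpow
  simp only [p, ← Nat.cast_succ, ENNReal.rpow_natCast] at hpow
  rw [mul_comm]
  exact hpow

lemma lintegral_pow_succ_lintegral_le {μ : Measure α} [SFinite μ] {ν : Measure β} [SFinite ν]
    {g : α → β → ℝ≥0∞} (hg : Measurable (Function.uncurry g)) (n : ℕ) {C : ℝ≥0∞}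
    (hC : ∀ᵐ a ∂μ, ∫⁻ b, g a b ^ (n + 1) ∂ν ≤ C) :
    ∫⁻ b, (∫⁻ a, g a b ∂μ) ^ (n + 1) ∂ν ≤ μ univ ^ (n + 1) * C :=
  calc ∫⁻ b, (∫⁻ a, g a b ∂μ) ^ (n + 1) ∂ν
      ≤ ∫⁻ b, μ univ ^ n * ∫⁻ a, g a b ^ (n + 1) ∂μ ∂ν :=
        lintegral_mono fun b =>
          pow_succ_lintegral_le (hg.comp (measurable_id.prodMk measurable_const)).aemeasurable n
    _ = μ univ ^ n * ∫⁻ a, ∫⁻ b, g a b ^ (n + 1) ∂ν ∂μ := by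
        rw [lintegral_const_mul _
            (Measurable.lintegral_prod_left' (f := fun p => g p.1 p.2 ^ (n + 1)) (hg.pow_const _)),
          lintegral_lintegral_swap
          (f := fun b a => g a b ^ (n + 1)) ((hg.pow_const _).comp measurable_swap).aemeasurable]
    _ ≤ μ univ ^ n * ∫⁻ _, C ∂μ := mul_le_mul_right (lintegral_mono_ae hC) _
    _ = μ univ ^ (n + 1) * C := by rw [lintegral_const, pow_succ]; ring

end Holder

lemma lintegral_ofReal_sq_div_pow_of_map_eq_gaussianReal {Ω : Type*} [MeasurableSpace Ω]
    {P : Measure Ω} {X : Ω → ℝ} (hX : AEMeasurable X P) {v : ℝ} (hv : 0 < v)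
    (hmap : P.map X = gaussianReal 0 v.toNNReal) (n : ℕ) :
    ∫⁻ ω, ENNReal.ofReal (X ω ^ 2 / v) ^ n ∂P
      = ENNReal.ofReal ((2 * n)! / (2 ^ n * n !)) := by
  have hvn : 0 < v ^ n := pow_pos hv n
  have hscale : ∀ x : ℝ, ENNReal.ofReal (x ^ 2 / v) ^ n
      = ENNReal.ofReal (x ^ (2 * n)) * (ENNReal.ofReal (v ^ n))⁻¹ := by
    intro x
    rw [← ENNReal.ofReal_pow (by positivity), div_pow, ← pow_mul, ENNReal.ofReal_div_of_pos hvn,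
      div_eq_mul_inv]
  simp only [hscale]
  rw [lintegral_mul_const' _ _ (by simp [hvn]),
    ← lintegral_map' (f := fun x : ℝ => ENNReal.ofReal (x ^ (2 * n))) (by fun_prop) hX, hmap,
    lintegral_pow_two_mul_gaussianReal, Real.coe_toNNReal _ hv.le, mul_div_assoc,
    ENNReal.ofReal_mul hvn.le, mul_comm, ← mul_assoc, ENNReal.inv_mul_cancel, one_mul]
  all_goals simp [hvn]

namespace IsStdBrownianMotion

variable {Ω : Type*} [MeasurableSpace Ω] {P : Measure Ω} {B : ℝ → Ω → ℝ}

lemma map_eq_gaussianReal (hB : IsStdBrownianMotion P B) {t : ℝ} (ht : 0 ≤ t) :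
    P.map (B t) = gaussianReal 0 t.toNNReal := by
  simpa [hB.init] using hB.gauss 0 t le_rfl ht

lemma measurable_ofReal_sq_div (hB : IsStdBrownianMotion P B) :
    Measurable fun p : ℝ × Ω => ENNReal.ofReal (B p.1 p.2 ^ 2 / p.1) :=
  (((measurable_uncurry_of_continuous_of_measurable hB.cont hB.meas).pow_const 2).div
    measurable_fst).ennreal_ofReal

lemma lintegral_pow_lintegral_sq_div_le [IsProbabilityMeasure P] (hB : IsStdBrownianMotion P B)
    {T : ℝ} (hT : 0 ≤ T) (n : ℕ) :
    ∫⁻ ω, (∫⁻ s in Ioc 0 T, ENNReal.ofReal (B s ω ^ 2 / s)) ^ n ∂P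
      ≤ ENNReal.ofReal (T ^ n * ((2 * n)! / (2 ^ n * n !))) := by
  cases n with
  | zero => simp
  | succ n =>
    have hmoment : ∀ᵐ s ∂volume.restrict (Ioc 0 T),
        ∫⁻ ω, ENNReal.ofReal (B s ω ^ 2 / s) ^ (n + 1) ∂P
          ≤ ENNReal.ofReal ((2 * (n + 1))! / (2 ^ (n + 1) * (n + 1)!)) := by
      filter_upwards [ae_restrict_mem measurableSet_Ioc] with s hs
      exact (lintegral_ofReal_sq_div_pow_of_map_eq_gaussianReal (hB.meas s).aemeasurable hs.1
        (hB.map_eq_gaussianReal hs.1.le) (n + 1)).le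
    calc _ ≤ _ := lintegral_pow_succ_lintegral_le hB.measurable_ofReal_sq_div n hmoment
      _ = _ := by
        rw [Measure.restrict_apply_univ, Real.volume_Ioc, sub_zero, ← ENNReal.ofReal_pow hT,
          ← ENNReal.ofReal_mul (by positivity)]

end IsStdBrownianMotion

/-- **Exponential moment of the Brownian quadratic functional `∫₀^T B_s²/s ds`.**
If `2kT < 1`, then `E[exp(k ∫₀^T B_s²/s ds)] ≤ Σ_{n=0}^∞ (kT)^n (2n)!/(2^n (n!)²)`,
and this series converges. -/
theorem exp_moment_quadratic_functional
    {Ω : Type*} [MeasurableSpace Ω] (P : Measure Ω) [IsProbabilityMeasure P]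
    (B : ℝ → Ω → ℝ) (hB : IsStdBrownianMotion P B)
    (T k : ℝ) (hT : 0 < T) (hk : 0 < k) (h : 2 * k * T < 1) :
    (Summable fun n : ℕ =>
      (k * T) ^ n * (Nat.factorial (2 * n) : ℝ) / (2 ^ n * (Nat.factorial n : ℝ) ^ 2)) ∧
    ∫⁻ ω, ENNReal.ofReal (Real.exp (k * ∫ s in (0 : ℝ)..T, (B s ω) ^ 2 / s)) ∂P ≤
      ∑' n : ℕ, ENNReal.ofReal
        ((k * T) ^ n * (Nat.factorial (2 * n) : ℝ) / (2 ^ n * (Nat.factorial n : ℝ) ^ 2)) := by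
  refine ⟨summable_pow_mul_factorial_two_mul_div (by positivity) (by linarith), ?_⟩
  set Y : Ω → ℝ≥0∞ := fun ω => ∫⁻ s in Ioc 0 T, ENNReal.ofReal (B s ω ^ 2 / s)
  have hY : Measurable Y := hB.measurable_ofReal_sq_div.lintegral_prod_left'
  have hexp : ∀ ω, ENNReal.ofReal (exp (k * ∫ s in (0 : ℝ)..T, B s ω ^ 2 / s))
      ≤ ∑' n : ℕ, ENNReal.ofReal (k ^ n / n !) * Y ω ^ n := by
    intro ω
    have hnonneg : 0 ≤ᵐ[volume.restrict (Ioc 0 T)] fun s => B s ω ^ 2 / s :=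
      (ae_restrict_mem measurableSet_Ioc).mono fun s hs => by positivity [hs.1]
    rw [intervalIntegral.integral_of_le hT.le]
    exact ENNReal.ofReal_exp_mul_le_tsum hk.le (integral_nonneg_of_ae hnonneg)
      (ofReal_integral_le_lintegral_ofReal hnonneg)
  calc _ ≤ ∫⁻ ω, ∑' n : ℕ, ENNReal.ofReal (k ^ n / n !) * Y ω ^ n ∂P :=
        lintegral_mono hexp
    _ = ∑' n : ℕ, ENNReal.ofReal (k ^ n / n !) * ∫⁻ ω, Y ω ^ n ∂P := by
        rw [lintegral_tsum fun n => ((hY.pow_const n).const_mul _).aemeasurable]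
        simp only [lintegral_const_mul _ (hY.pow_const _)]
    _ ≤ ∑' n : ℕ, ENNReal.ofReal (k ^ n / n !) *
          ENNReal.ofReal (T ^ n * ((2 * n)! / (2 ^ n * n !))) := by
        gcongr with n
        exact hB.lintegral_pow_lintegral_sq_div_le hT.le n
    _ = _ := by
        congr 1 with n
        rw [← ENNReal.ofReal_mul (by positivity)]
        congr 1
        field_simp
        ring
end

section
/- Exponential integrability of the squared drift along Brownian motion: Let B be a d-dimensional Brownian motion, σ ∈ ℝ^d with ‖σ‖² > 0, and let b(t,y,ω) = b₁(t,y) + b₂(t,y,ω) where b₁ : [0,T]×ℝ → ℝ is Borel with |b₁(t,y)| ≤ k(1+|y|) and b₂ : [0,T]×ℝ×Ω → ℝ is measurable with |b₂(t,y,ω)| ≤ M₂(ω) for all (t,y,ω). Then for every a > 0 and x ∈ ℝ: E[exp(a ∫₀^T b(r, x + σ·B_r, ω)² dr)] ≤ exp(4 a k² T (1+|x|)²) · E[exp(8 a k² T sup_{0≤t≤T} |σ·B_t|²)]^{1/2} · E[exp(4 a T M₂²)]^{1/2}. In particular the left-hand side is finite provided 16 a k² ‖σ‖² T² < 1 and E[exp(4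 a T M₂²)] < ∞. -/
open MeasureTheory ProbabilityTheory Set

open scoped NNReal ENNReal

lemma gauss_exp_sq_le (θ : ℝ) (v : ℝ≥0) (hv : v ≠ 0) (c : ℝ)
    (hc : 2 * θ * v ≤ c) (hc1 : c < 1) :
    ∫⁻ y, ENNReal.ofReal (Real.exp (θ * y ^ 2)) ∂(gaussianReal 0 v) ≤
      ENNReal.ofReal (Real.sqrt ((1 - c)⁻¹)) := by
  have hvpos : (0:ℝ) < v := lt_of_le_of_ne v.coe_nonneg (by exact_mod_cast (Ne.symm hv))
  set b : ℝ := 1 / (2 * v) - θ with hb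
  have hbpos : 0 < b := by
    have h1 : 2 * θ * v < 1 := lt_of_le_of_lt hc hc1
    have : θ < 1 / (2 * v) := by
      rw [lt_div_iff₀ (by positivity)]
      nlinarith
    simpa [hb] using sub_pos.mpr this
  have hg : Measurable fun y : ℝ => ENNReal.ofReal (Real.exp (θ * y ^ 2)) :=
    (Real.measurable_exp.comp (measurable_const.mul (measurable_id.pow_const 2))).ennreal_ofReal
  rw [gaussianReal_of_var_ne_zero 0 hv,
    lintegral_withDensity_eq_lintegral_mul _ (measurable_gaussianPDF 0 v) hg]
  have heq : ∀ y : ℝ, (gaussianPDF 0 v y * ENNReal.ofReal (Real.exp (θ * y ^ 2)))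
      = ENNReal.ofReal ((Real.sqrt (2 * Real.pi * v))⁻¹ * Real.exp (-b * y ^ 2)) := by
    intro y
    rw [gaussianPDF, ← ENNReal.ofReal_mul (gaussianPDFReal_nonneg 0 v y)]
    congr 1
    rw [gaussianPDFReal, mul_assoc, ← Real.exp_add]
    congr 2
    field_simp [hb]
    rw [hb]; field_simp; ring
  simp only [Pi.mul_apply, heq]
  have hint : Integrable (fun y : ℝ => (Real.sqrt (2 * Real.pi * v))⁻¹ * Real.exp (-b * y ^ 2)) :=
    (integrable_exp_neg_mul_sq hbpos).const_mul _
  rw [← ofReal_integral_eq_lintegral_ofReal hint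
    (Filter.Eventually.of_forall fun y => by positivity)]
  apply ENNReal.ofReal_le_ofReal
  rw [integral_const_mul, integral_gaussian]
  have h2vb : 1 - c ≤ 2 * v * b := by
    rw [hb]; field_simp; nlinarith
  have h1c : 0 < 1 - c := by linarith
  have hstep : (Real.sqrt (2 * Real.pi * v))⁻¹ * Real.sqrt (Real.pi / b)
      = Real.sqrt ((2 * v * b)⁻¹) := by
    rw [← Real.sqrt_inv, ← Real.sqrt_mul (by positivity)]
    congr 1
    have hπ := Real.pi_pos
    field_simp
  rw [hstep]
  apply Real.sqrt_le_sqrt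
  rw [inv_le_inv₀ (by positivity) h1c]
  exact h2vb

lemma ciSup_subtype_eq_of_dense {s D : Set ℝ} (hsc : IsCompact s)
    (hs : s.Nonempty) (hDs : D ⊆ s) (hsD : s ⊆ closure D)
    (g : ℝ → ℝ) (hg : Continuous g) :
    (⨆ t : s, g t) = ⨆ q : D, g q := by
  have hDne : D.Nonempty := by
    rcases hs with ⟨t, ht⟩
    by_contra h
    rw [not_nonempty_iff_eq_empty] at h
    simpa [h] using hsD ht
  have hA : BddAbove (g '' s) := (hsc.image_of_continuousOn hg.continuousOn).bddAbove
  have hAq : BddAbove (g '' D) := hA.mono (image_mono hDs)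
  rw [iSup, iSup, ← Set.image_eq_range, ← Set.image_eq_range]
  apply le_antisymm
  · apply csSup_le (hs.image g)
    rintro y ⟨t, ht, rfl⟩
    have h1 : g t ∈ closure (g '' D) :=
      (image_closure_subset_closure_image hg) ⟨t, hsD ht, rfl⟩
    have h2 : sSup (g '' D) ∈ upperBounds (closure (g '' D)) := by
      rw [upperBounds_closure]
      exact fun y hy => le_csSup hAq hy
    exact h2 h1
  · exact csSup_le_csSup hA (hDne.image g) (image_mono hDs)

theorem aux_main
    {Ω : Type*} [MeasurableSpace Ω] (P : Measure Ω) [IsProbabilityMeasure P]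
    (f : ℝ → Ω → ℝ)
    (hfc : ∀ ω, Continuous fun t => f t ω)
    (hfm : Measurable fun q : ℝ × Ω => f q.1 q.2)
    (V : ℝ) (hV : 0 < V)
    (hgauss : ∀ r : ℝ, 0 < r → P.map (fun ω => f r ω) = gaussianReal 0 ((r * V).toNNReal))
    (T : ℝ) (hT : 0 < T) (k : ℝ) (hk : 0 ≤ k)
    (b₁ : ℝ → ℝ → ℝ) (hb₁meas : Measurable fun q : ℝ × ℝ => b₁ q.1 q.2)
    (hb₁g : ∀ t ∈ Icc (0 : ℝ) T, ∀ y : ℝ, |b₁ t y| ≤ k * (1 + |y|))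
    (b₂ : ℝ → ℝ → Ω → ℝ)
    (hb₂meas : Measurable fun q : ℝ × ℝ × Ω => b₂ q.1 q.2.1 q.2.2)
    (M₂ : Ω → ℝ) (hM₂ : Measurable M₂)
    (hb₂b : ∀ t ∈ Icc (0 : ℝ) T, ∀ (y : ℝ) (ω : Ω), |b₂ t y ω| ≤ M₂ ω)
    (a : ℝ) (ha : 0 < a) (x : ℝ) :
    (∫⁻ ω, ENNReal.ofReal (Real.exp (a *
        ∫ r in (0 : ℝ)..T, (b₁ r (x + f r ω) + b₂ r (x + f r ω) ω) ^ 2)) ∂P ≤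
      ENNReal.ofReal (Real.exp (4 * a * k ^ 2 * T * (1 + |x|) ^ 2)) *
        (∫⁻ ω, ENNReal.ofReal (Real.exp (8 * a * k ^ 2 * T *
          ⨆ t : Icc (0 : ℝ) T, |f (t : ℝ) ω| ^ 2)) ∂P) ^ ((1 : ℝ) / 2) *
        (∫⁻ ω, ENNReal.ofReal (Real.exp (4 * a * T * M₂ ω ^ 2)) ∂P) ^ ((1 : ℝ) / 2)) ∧
    (16 * a * k ^ 2 * V * T ^ 2 < 1 →
      (∫⁻ ω, ENNReal.ofReal (Real.exp (4 * a * T * M₂ ω ^ 2)) ∂P) < ⊤ →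
      (∫⁻ ω, ENNReal.ofReal (Real.exp (a *
        ∫ r in (0 : ℝ)..T, (b₁ r (x + f r ω) + b₂ r (x + f r ω) ω) ^ 2)) ∂P) < ⊤) := by
  classical
  -- basic measurability of slices
  have hfmr : ∀ ω, Measurable fun r => f r ω :=
    fun ω => hfm.comp (measurable_id.prodMk measurable_const)
  have hfmt : ∀ t, Measurable fun ω => f t ω :=
    fun t => hfm.comp (measurable_const.prodMk measurable_id)
  -- the sup of the squared path
  have hSbdd : ∀ ω, BddAbove (range fun t : Icc (0:ℝ) T => |f (t:ℝ) ω| ^ 2) := by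
    intro ω
    obtain ⟨t0, ht0, hmax⟩ := isCompact_Icc.exists_isMaxOn (nonempty_Icc.mpr hT.le)
      (((hfc ω).abs.pow 2).continuousOn)
    refine ⟨|f t0 ω| ^ 2, ?_⟩
    rintro y ⟨t, rfl⟩
    exact hmax t.2
  have hfleS : ∀ ω, ∀ r ∈ Icc (0:ℝ) T,
      (f r ω) ^ 2 ≤ ⨆ t : Icc (0:ℝ) T, |f (t:ℝ) ω| ^ 2 := by
    intro ω r hr
    rw [← sq_abs]
    exact le_ciSup (hSbdd ω) (⟨r, hr⟩ : Icc (0:ℝ) T)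
  have hS0 : ∀ ω, 0 ≤ ⨆ t : Icc (0:ℝ) T, |f (t:ℝ) ω| ^ 2 :=
    fun ω => (sq_nonneg _).trans (hfleS ω 0 ⟨le_refl _, hT.le⟩)
  have hM0 : ∀ ω, 0 ≤ M₂ ω :=
    fun ω => (abs_nonneg _).trans (hb₂b 0 ⟨le_refl _, hT.le⟩ 0 ω)
  -- measurability of the sup via a countable dense set
  have hSmeas : Measurable fun ω => ⨆ t : Icc (0:ℝ) T, |f (t:ℝ) ω| ^ 2 := by
    set D : Set ℝ := insert T (((↑) : ℚ → ℝ) '' {q : ℚ | (q:ℝ) ∈ Ico 0 T}) with hD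
    have hDcount : D.Countable := ((Set.to_countable _).image _).insert T
    have hDs : D ⊆ Icc 0 T := by
      rintro y (rfl | ⟨q, hq, rfl⟩)
      · exact ⟨hT.le, le_refl _⟩
      · exact ⟨hq.1, hq.2.le⟩
    have hsD : Icc (0:ℝ) T ⊆ closure D := by
      have h1 : Icc (0:ℝ) T = closure (Ioo 0 T) := (closure_Ioo hT.ne).symm
      have h2 : Ioo (0:ℝ) T ⊆ closure (Ioo 0 T ∩ range ((↑) : ℚ → ℝ)) :=
        Rat.denseRange_cast.open_subset_closure_inter isOpen_Ioo
      have h3 : Ioo (0:ℝ) T ∩ range ((↑) : ℚ → ℝ) ⊆ D := by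
        rintro y ⟨hy, q, rfl⟩
        exact Or.inr ⟨q, ⟨hy.1.le, hy.2⟩, rfl⟩
      calc Icc (0:ℝ) T = closure (Ioo 0 T) := h1
        _ ⊆ closure (closure (Ioo 0 T ∩ range ((↑) : ℚ → ℝ))) := closure_mono h2
        _ = closure (Ioo 0 T ∩ range ((↑) : ℚ → ℝ)) := closure_closure
        _ ⊆ closure D := closure_mono h3
    have hrw : ∀ ω, (⨆ t : Icc (0:ℝ) T, |f (t:ℝ) ω| ^ 2) = ⨆ q : D, |f (q:ℝ) ω| ^ 2 :=
      fun ω => ciSup_subtype_eq_of_dense isCompact_Icc (nonempty_Icc.mpr hT.le) hDs hsD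
        _ ((hfc ω).abs.pow 2)
    simp only [hrw]
    haveI := hDcount.to_subtype
    exact Measurable.iSup fun q => ((hfmt q).abs.pow_const 2)
  -- slice measurability of the drift
  have hYm : ∀ ω, Measurable fun r => (b₁ r (x + f r ω) + b₂ r (x + f r ω) ω) ^ 2 := by
    intro ω
    have m1 : Measurable fun r => b₁ r (x + f r ω) :=
      hb₁meas.comp (measurable_id.prodMk (measurable_const.add (hfmr ω)))
    have m2 : Measurable fun r => b₂ r (x + f r ω) ω :=
      hb₂meas.comp (measurable_id.prodMk
        ((measurable_const.add (hfmr ω)).prodMk measurable_const))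
    exact (m1.add m2).pow_const 2
  -- pointwise bound
  have hptw : ∀ ω, ∀ r ∈ Icc (0:ℝ) T,
      (b₁ r (x + f r ω) + b₂ r (x + f r ω) ω) ^ 2 ≤
        4 * k ^ 2 * (1 + |x|) ^ 2 + 4 * k ^ 2 * (f r ω) ^ 2 + 2 * M₂ ω ^ 2 := by
    intro ω r hr
    have h1 := hb₁g r hr (x + f r ω)
    have h2 := hb₂b r hr (x + f r ω) ω
    have habs : |x + f r ω| ≤ |x| + |f r ω| := abs_add_le _ _
    have hb1sq : (b₁ r (x + f r ω)) ^ 2 ≤ (k * (1 + |x + f r ω|)) ^ 2 := by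
      have := abs_le.mp h1
      exact sq_le_sq' (by linarith) this.2
    have hb2sq : (b₂ r (x + f r ω) ω) ^ 2 ≤ M₂ ω ^ 2 := by
      have := abs_le.mp h2
      exact sq_le_sq' (by linarith) this.2
    have hy1 : (k * (1 + |x + f r ω|)) ^ 2 ≤ (k * (1 + |x| + |f r ω|)) ^ 2 := by
      have h0 : 0 ≤ k * (1 + |x + f r ω|) := by positivity
      have hk2 : 0 ≤ k * (1 + |x| + |f r ω|) := by positivity
      apply sq_le_sq' (by linarith)
      exact mul_le_mul_of_nonneg_left (by linarith) hk
    have hy2 : (k * (1 + |x| + |f r ω|)) ^ 2 ≤ 2 * k ^ 2 * (1 + |x|) ^ 2 + 2 * k ^ 2 * (f r ω) ^ 2 := by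
      have h3 : (1 + |x| + |f r ω|)^2 ≤ 2 * (1 + |x|)^2 + 2 * |f r ω|^2 := by
        nlinarith [sq_nonneg ((1 + |x|) - |f r ω|)]
      have h4 : k ^ 2 * (1 + |x| + |f r ω|)^2 ≤ k ^ 2 * (2 * (1 + |x|)^2 + 2 * |f r ω|^2) :=
        mul_le_mul_of_nonneg_left h3 (sq_nonneg k)
      calc (k * (1 + |x| + |f r ω|)) ^ 2 = k ^ 2 * (1 + |x| + |f r ω|)^2 := by ring
        _ ≤ k ^ 2 * (2 * (1 + |x|)^2 + 2 * |f r ω|^2) := h4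
        _ = 2 * k ^ 2 * (1 + |x|) ^ 2 + 2 * k ^ 2 * (f r ω) ^ 2 := by
            rw [sq_abs]; ring
    nlinarith [sq_nonneg (b₁ r (x + f r ω) - b₂ r (x + f r ω) ω)]
  -- integrability of the drift squared on [0,T]
  have hφint : ∀ ω, IntervalIntegrable
      (fun r => 4 * k ^ 2 * (1 + |x|) ^ 2 + 4 * k ^ 2 * (f r ω) ^ 2 + 2 * M₂ ω ^ 2)
      volume 0 T := by
    intro ω
    apply Continuous.intervalIntegrable
    exact (continuous_const.add (continuous_const.mul ((hfc ω).pow 2))).add continuous_const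
  have hYint : ∀ ω, IntervalIntegrable
      (fun r => (b₁ r (x + f r ω) + b₂ r (x + f r ω) ω) ^ 2) volume 0 T := by
    intro ω
    rw [intervalIntegrable_iff_integrableOn_Ioc_of_le hT.le]
    apply Integrable.mono' (hφint ω).1
    · exact ((hYm ω).aestronglyMeasurable).restrict
    · rw [ae_restrict_iff' measurableSet_Ioc]
      refine Filter.Eventually.of_forall fun r hr => ?_
      rw [Real.norm_eq_abs, abs_of_nonneg (sq_nonneg _)]
      exact hptw ω r (Ioc_subset_Icc_self hr)
  have hpq : Real.HolderConjugate 2 2 := Real.holderConjugate_iff.mpr ⟨one_lt_two, by norm_num⟩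
  have hsq : ∀ u : ℝ, (ENNReal.ofReal (Real.exp u)) ^ (2:ℝ) = ENNReal.ofReal (Real.exp (2*u)) := by
    intro u
    rw [ENNReal.ofReal_rpow_of_pos (Real.exp_pos u), ← Real.exp_mul, mul_comm]
  have hgmeas : Measurable fun ω =>
      ENNReal.ofReal (Real.exp (4*a*k^2*T* (⨆ t : Icc (0:ℝ) T, |f (t:ℝ) ω| ^ 2))) :=
    (Real.measurable_exp.comp (measurable_const.mul hSmeas)).ennreal_ofReal
  have hhmeas : Measurable fun ω => ENNReal.ofReal (Real.exp (2*a*T*M₂ ω^2)) :=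
    (Real.measurable_exp.comp (measurable_const.mul (hM₂.pow_const 2))).ennreal_ofReal
  constructor
  · -- Part 1
    have hexp1 : ∀ ω, a * (∫ r in (0:ℝ)..T, (b₁ r (x + f r ω) + b₂ r (x + f r ω) ω) ^ 2)
        ≤ 4*a*k^2*T*(1+|x|)^2 +
          (4*a*k^2*T* (⨆ t : Icc (0:ℝ) T, |f (t:ℝ) ω| ^ 2) + 2*a*T*M₂ ω^2) := by
      intro ω
      have h1 : (∫ r in (0:ℝ)..T, (b₁ r (x + f r ω) + b₂ r (x + f r ω) ω) ^ 2)
          ≤ ∫ _ in (0:ℝ)..T, (4 * k ^ 2 * (1 + |x|) ^ 2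
              + 4 * k ^ 2 * (⨆ t : Icc (0:ℝ) T, |f (t:ℝ) ω| ^ 2) + 2 * M₂ ω ^ 2) := by
        apply intervalIntegral.integral_mono_on hT.le (hYint ω) intervalIntegrable_const
        intro r hr
        have h2 := hptw ω r hr
        have h3 := hfleS ω r hr
        nlinarith [sq_nonneg k]
      rw [intervalIntegral.integral_const, smul_eq_mul, sub_zero] at h1
      calc a * (∫ r in (0:ℝ)..T, (b₁ r (x + f r ω) + b₂ r (x + f r ω) ω) ^ 2)
          ≤ a * (T * (4 * k ^ 2 * (1 + |x|) ^ 2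
              + 4 * k ^ 2 * (⨆ t : Icc (0:ℝ) T, |f (t:ℝ) ω| ^ 2) + 2 * M₂ ω ^ 2)) :=
            mul_le_mul_of_nonneg_left h1 ha.le
        _ = _ := by ring
    calc ∫⁻ ω, ENNReal.ofReal (Real.exp (a *
            ∫ r in (0:ℝ)..T, (b₁ r (x + f r ω) + b₂ r (x + f r ω) ω) ^ 2)) ∂P
        ≤ ∫⁻ ω, ENNReal.ofReal (Real.exp (4*a*k^2*T*(1+|x|)^2)) *
            (ENNReal.ofReal (Real.exp (4*a*k^2*T* (⨆ t : Icc (0:ℝ) T, |f (t:ℝ) ω| ^ 2))) *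
             ENNReal.ofReal (Real.exp (2*a*T*M₂ ω^2))) ∂P := by
          apply lintegral_mono
          intro ω
          dsimp only
          rw [← ENNReal.ofReal_mul (Real.exp_pos _).le, ← Real.exp_add,
            ← ENNReal.ofReal_mul (Real.exp_pos _).le, ← Real.exp_add]
          exact ENNReal.ofReal_le_ofReal (Real.exp_le_exp.mpr (hexp1 ω))
      _ = ENNReal.ofReal (Real.exp (4*a*k^2*T*(1+|x|)^2)) *
            ∫⁻ ω, (ENNReal.ofReal (Real.exp (4*a*k^2*T* (⨆ t : Icc (0:ℝ) T, |f (t:ℝ) ω| ^ 2))) *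
             ENNReal.ofReal (Real.exp (2*a*T*M₂ ω^2))) ∂P :=
          lintegral_const_mul' _ _ ENNReal.ofReal_ne_top
      _ ≤ ENNReal.ofReal (Real.exp (4*a*k^2*T*(1+|x|)^2)) *
            ((∫⁻ ω, (ENNReal.ofReal (Real.exp (4*a*k^2*T*
                (⨆ t : Icc (0:ℝ) T, |f (t:ℝ) ω| ^ 2)))) ^ (2:ℝ) ∂P) ^ ((1:ℝ)/2) *
             (∫⁻ ω, (ENNReal.ofReal (Real.exp (2*a*T*M₂ ω^2))) ^ (2:ℝ) ∂P) ^ ((1:ℝ)/2)) := by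
          apply mul_le_mul_right
          exact ENNReal.lintegral_mul_le_Lp_mul_Lq P hpq hgmeas.aemeasurable hhmeas.aemeasurable
      _ = _ := by
          have g1 : ∀ ω : Ω, (ENNReal.ofReal (Real.exp (4*a*k^2*T*
                (⨆ t : Icc (0:ℝ) T, |f (t:ℝ) ω| ^ 2)))) ^ (2:ℝ)
              = ENNReal.ofReal (Real.exp (8*a*k^2*T*(⨆ t : Icc (0:ℝ) T, |f (t:ℝ) ω| ^ 2))) := by
            intro ω; rw [hsq]; congr 2; ring
          have g2 : ∀ ω : Ω, (ENNReal.ofReal (Real.exp (2*a*T*M₂ ω^2))) ^ (2:ℝ)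
              = ENNReal.ofReal (Real.exp (4*a*T*M₂ ω^2)) := by
            intro ω; rw [hsq]; congr 2; ring
          simp only [g1, g2]; exact (mul_assoc _ _ _).symm
  · -- Part 2
    intro hsmall hMfin
    have hJmeas : Measurable fun ω => ∫ r in (0:ℝ)..T, (f r ω) ^ 2 := by
      simp only [intervalIntegral.integral_of_le hT.le]
      have hsm : StronglyMeasurable fun p : Ω × ℝ => (f p.2 p.1) ^ 2 :=
        ((hfm.comp measurable_swap).pow_const 2).stronglyMeasurable
      exact (StronglyMeasurable.integral_prod_right'
        (ν := (volume : Measure ℝ).restrict (Set.Ioc (0:ℝ) T)) hsm).measurable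
    have hGmeas : Measurable fun ω =>
        ENNReal.ofReal (Real.exp (4*a*k^2*(∫ r in (0:ℝ)..T, (f r ω) ^ 2))) :=
      (Real.measurable_exp.comp (measurable_const.mul hJmeas)).ennreal_ofReal
    have hexp2 : ∀ ω, a * (∫ r in (0:ℝ)..T, (b₁ r (x + f r ω) + b₂ r (x + f r ω) ω) ^ 2)
        ≤ 4*a*k^2*T*(1+|x|)^2 +
          (4*a*k^2*(∫ r in (0:ℝ)..T, (f r ω) ^ 2) + 2*a*T*M₂ ω^2) := by
      intro ω
      have hf2int : IntervalIntegrable (fun r => 4*k^2*(f r ω)^2) volume 0 T :=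
        (continuous_const.mul ((hfc ω).pow 2)).intervalIntegrable _ _
      have h1 := intervalIntegral.integral_mono_on hT.le (hYint ω) (hφint ω) (hptw ω)
      have h2 : (∫ r in (0:ℝ)..T, (4*k^2*(1+|x|)^2 + 4*k^2*(f r ω)^2 + 2*M₂ ω^2))
          = T*(4*k^2*(1+|x|)^2) + 4*k^2*(∫ r in (0:ℝ)..T, (f r ω) ^ 2) + T*(2*M₂ ω^2) := by
        rw [intervalIntegral.integral_add (intervalIntegrable_const.add hf2int)
            intervalIntegrable_const,
          intervalIntegral.integral_add intervalIntegrable_const hf2int,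
          intervalIntegral.integral_const, intervalIntegral.integral_const,
          intervalIntegral.integral_const_mul, smul_eq_mul, smul_eq_mul, sub_zero]
      rw [h2] at h1
      calc a * (∫ r in (0:ℝ)..T, (b₁ r (x + f r ω) + b₂ r (x + f r ω) ω) ^ 2)
          ≤ a * (T*(4*k^2*(1+|x|)^2) + 4*k^2*(∫ r in (0:ℝ)..T, (f r ω) ^ 2) + T*(2*M₂ ω^2)) :=
            mul_le_mul_of_nonneg_left h1 ha.le
        _ = _ := by ring
    -- Jensen + Gaussian: the key finiteness
    have hμ0univ : (volume : Measure ℝ).restrict (Set.Ioc (0:ℝ) T) Set.univ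
        = ENNReal.ofReal T := by
      rw [Measure.restrict_apply_univ, Real.volume_Ioc, sub_zero]
    haveI hfin : IsFiniteMeasure ((volume : Measure ℝ).restrict (Set.Ioc (0:ℝ) T)) :=
      ⟨by rw [hμ0univ]; exact ENNReal.ofReal_lt_top⟩
    haveI hnz : NeZero ((volume : Measure ℝ).restrict (Set.Ioc (0:ℝ) T)) := by
      refine ⟨fun h => ?_⟩
      rw [h] at hμ0univ
      simp only [Measure.coe_zero, Pi.zero_apply] at hμ0univ
      have := ENNReal.ofReal_pos.mpr hT
      rw [← hμ0univ] at this
      exact lt_irrefl _ this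
    have hexpint : ∀ ω, Integrable (fun r => Real.exp (8*a*k^2*T*(f r ω)^2))
        ((volume : Measure ℝ).restrict (Set.Ioc (0:ℝ) T)) := fun ω =>
      (Real.continuous_exp.comp (continuous_const.mul ((hfc ω).pow 2))).integrableOn_Ioc
    have hjensen : ∀ ω, Real.exp (8*a*k^2*(∫ r in (0:ℝ)..T, (f r ω) ^ 2))
        ≤ T⁻¹ * ∫ r, Real.exp (8*a*k^2*T*(f r ω)^2)
            ∂((volume : Measure ℝ).restrict (Set.Ioc (0:ℝ) T)) := by
      intro ω
      have hlin : Integrable (fun r => 8*a*k^2*T*(f r ω)^2)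
          ((volume : Measure ℝ).restrict (Set.Ioc (0:ℝ) T)) :=
        (continuous_const.mul ((hfc ω).pow 2)).integrableOn_Ioc
      have hconv := convexOn_exp.map_average_le Real.continuous_exp.continuousOn
        isClosed_univ (Filter.Eventually.of_forall fun r => Set.mem_univ _) hlin (hexpint ω)
      rw [average_eq, average_eq, measureReal_def, hμ0univ, ENNReal.toReal_ofReal hT.le,
        smul_eq_mul, smul_eq_mul] at hconv
      have hL : T⁻¹ * ∫ r, 8*a*k^2*T*(f r ω)^2
            ∂((volume : Measure ℝ).restrict (Set.Ioc (0:ℝ) T))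
          = 8*a*k^2*(∫ r in (0:ℝ)..T, (f r ω) ^ 2) := by
        rw [integral_const_mul, intervalIntegral.integral_of_le hT.le]
        field_simp
      rw [← hL]
      exact hconv
    have hG2lt : (∫⁻ ω, ENNReal.ofReal (Real.exp (8*a*k^2*
        (∫ r in (0:ℝ)..T, (f r ω) ^ 2))) ∂P) < ⊤ := by
      have hcalc : (∫⁻ ω, ENNReal.ofReal (Real.exp (8*a*k^2*
          (∫ r in (0:ℝ)..T, (f r ω) ^ 2))) ∂P)
          ≤ ENNReal.ofReal T⁻¹ * ∫⁻ r in Set.Ioc (0:ℝ) T,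
              (ENNReal.ofReal (Real.sqrt ((1 - 16*a*k^2*V*T^2)⁻¹))) ∂volume := by
        calc (∫⁻ ω, ENNReal.ofReal (Real.exp (8*a*k^2*
              (∫ r in (0:ℝ)..T, (f r ω) ^ 2))) ∂P)
            ≤ ∫⁻ ω, ENNReal.ofReal T⁻¹ * ENNReal.ofReal (∫ r, Real.exp (8*a*k^2*T*(f r ω)^2)
                ∂((volume : Measure ℝ).restrict (Set.Ioc (0:ℝ) T))) ∂P := by
              apply lintegral_mono
              intro ω
              dsimp only
              rw [← ENNReal.ofReal_mul (by positivity)]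
              exact ENNReal.ofReal_le_ofReal (hjensen ω)
          _ = ENNReal.ofReal T⁻¹ * ∫⁻ ω, ENNReal.ofReal (∫ r, Real.exp (8*a*k^2*T*(f r ω)^2)
                ∂((volume : Measure ℝ).restrict (Set.Ioc (0:ℝ) T))) ∂P :=
              lintegral_const_mul' _ _ ENNReal.ofReal_ne_top
          _ = ENNReal.ofReal T⁻¹ * ∫⁻ ω, (∫⁻ r, ENNReal.ofReal (Real.exp (8*a*k^2*T*(f r ω)^2))
                ∂((volume : Measure ℝ).restrict (Set.Ioc (0:ℝ) T))) ∂P := by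
              congr 1
              apply lintegral_congr
              intro ω
              exact ofReal_integral_eq_lintegral_ofReal (hexpint ω)
                (Filter.Eventually.of_forall fun r => (Real.exp_pos _).le)
          _ = ENNReal.ofReal T⁻¹ * ∫⁻ r, (∫⁻ ω, ENNReal.ofReal
                (Real.exp (8*a*k^2*T*(f r ω)^2)) ∂P)
                ∂((volume : Measure ℝ).restrict (Set.Ioc (0:ℝ) T)) := by
              congr 1
              apply lintegral_lintegral_swap
              exact ((Real.measurable_exp.comp (measurable_const.mul
                ((hfm.comp measurable_swap).pow_const 2))).ennreal_ofReal).aemeasurable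
          _ ≤ ENNReal.ofReal T⁻¹ * ∫⁻ r in Set.Ioc (0:ℝ) T,
                (ENNReal.ofReal (Real.sqrt ((1 - 16*a*k^2*V*T^2)⁻¹))) ∂volume := by
              apply mul_le_mul_right
              apply setLIntegral_mono measurable_const
              intro r hr
              have hrV : (0:ℝ) < r * V := mul_pos hr.1 hV
              have hmeasθ : Measurable fun y : ℝ =>
                  ENNReal.ofReal (Real.exp (8*a*k^2*T * y^2)) :=
                (Real.measurable_exp.comp
                  (measurable_const.mul (measurable_id.pow_const 2))).ennreal_ofReal
              have hrwmap : ∫⁻ ω, ENNReal.ofReal (Real.exp (8*a*k^2*T*(f r ω)^2)) ∂P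
                  = ∫⁻ y, ENNReal.ofReal (Real.exp (8*a*k^2*T*y^2))
                      ∂(gaussianReal 0 ((r*V).toNNReal)) := by
                rw [← hgauss r hr.1, lintegral_map hmeasθ (hfmt r)]
              rw [hrwmap]
              apply gauss_exp_sq_le
              · simp only [ne_eq, Real.toNNReal_eq_zero, not_le]
                exact hrV
              · rw [Real.coe_toNNReal _ (le_of_lt hrV)]
                have hTr : r ≤ T := hr.2
                nlinarith [mul_nonneg (mul_nonneg ha.le (sq_nonneg k))
                  (mul_nonneg hV.le (mul_nonneg (hr.1.le.trans hTr) (sub_nonneg.mpr hTr)))]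
              · exact hsmall
      apply lt_of_le_of_lt hcalc
      rw [setLIntegral_const, Real.volume_Ioc, sub_zero]
      exact ENNReal.mul_lt_top ENNReal.ofReal_lt_top
        (ENNReal.mul_lt_top ENNReal.ofReal_lt_top ENNReal.ofReal_lt_top)
    -- now the Cauchy–Schwarz bound with the integral (not the sup)
    have hbound : (∫⁻ ω, ENNReal.ofReal (Real.exp (a *
          ∫ r in (0:ℝ)..T, (b₁ r (x + f r ω) + b₂ r (x + f r ω) ω) ^ 2)) ∂P)
        ≤ ENNReal.ofReal (Real.exp (4*a*k^2*T*(1+|x|)^2)) *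
          ((∫⁻ ω, ENNReal.ofReal (Real.exp (8*a*k^2*
              (∫ r in (0:ℝ)..T, (f r ω) ^ 2))) ∂P) ^ ((1:ℝ)/2) *
           (∫⁻ ω, ENNReal.ofReal (Real.exp (4*a*T*M₂ ω^2)) ∂P) ^ ((1:ℝ)/2)) := by
      calc ∫⁻ ω, ENNReal.ofReal (Real.exp (a *
              ∫ r in (0:ℝ)..T, (b₁ r (x + f r ω) + b₂ r (x + f r ω) ω) ^ 2)) ∂P
          ≤ ∫⁻ ω, ENNReal.ofReal (Real.exp (4*a*k^2*T*(1+|x|)^2)) *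
              (ENNReal.ofReal (Real.exp (4*a*k^2*(∫ r in (0:ℝ)..T, (f r ω) ^ 2))) *
               ENNReal.ofReal (Real.exp (2*a*T*M₂ ω^2))) ∂P := by
            apply lintegral_mono
            intro ω
            dsimp only
            rw [← ENNReal.ofReal_mul (Real.exp_pos _).le, ← Real.exp_add,
              ← ENNReal.ofReal_mul (Real.exp_pos _).le, ← Real.exp_add]
            exact ENNReal.ofReal_le_ofReal (Real.exp_le_exp.mpr (hexp2 ω))
        _ = ENNReal.ofReal (Real.exp (4*a*k^2*T*(1+|x|)^2)) *
              ∫⁻ ω, (ENNReal.ofReal (Real.exp (4*a*k^2*(∫ r in (0:ℝ)..T, (f r ω) ^ 2))) *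
               ENNReal.ofReal (Real.exp (2*a*T*M₂ ω^2))) ∂P :=
            lintegral_const_mul' _ _ ENNReal.ofReal_ne_top
        _ ≤ ENNReal.ofReal (Real.exp (4*a*k^2*T*(1+|x|)^2)) *
              ((∫⁻ ω, (ENNReal.ofReal (Real.exp (4*a*k^2*
                  (∫ r in (0:ℝ)..T, (f r ω) ^ 2)))) ^ (2:ℝ) ∂P) ^ ((1:ℝ)/2) *
               (∫⁻ ω, (ENNReal.ofReal (Real.exp (2*a*T*M₂ ω^2))) ^ (2:ℝ) ∂P) ^ ((1:ℝ)/2)) := by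
            apply mul_le_mul_right
            exact ENNReal.lintegral_mul_le_Lp_mul_Lq P hpq hGmeas.aemeasurable
              hhmeas.aemeasurable
        _ = _ := by
            have g1 : ∀ ω : Ω, (ENNReal.ofReal (Real.exp (4*a*k^2*
                  (∫ r in (0:ℝ)..T, (f r ω) ^ 2)))) ^ (2:ℝ)
                = ENNReal.ofReal (Real.exp (8*a*k^2*(∫ r in (0:ℝ)..T, (f r ω) ^ 2))) := by
              intro ω; rw [hsq]; congr 2; ring
            have g2 : ∀ ω : Ω, (ENNReal.ofReal (Real.exp (2*a*T*M₂ ω^2))) ^ (2:ℝ)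
                = ENNReal.ofReal (Real.exp (4*a*T*M₂ ω^2)) := by
              intro ω; rw [hsq]; congr 2; ring
            simp only [g1, g2]
    apply lt_of_le_of_lt hbound
    apply ENNReal.mul_lt_top ENNReal.ofReal_lt_top
    apply ENNReal.mul_lt_top
    · exact ENNReal.rpow_lt_top_of_nonneg (by norm_num) hG2lt.ne
    · exact ENNReal.rpow_lt_top_of_nonneg (by norm_num) hMfin.ne


/-- A `d`-dimensional Brownian motion: continuous paths starting at the origin,
Gaussian increments (any linear functional `σ·(B_t − B_s)` of an increment is
centered Gaussian with variance `(t−s)‖σ‖²`), and independent increments over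
disjoint intervals. -/
structure IsBrownianMotion {Ω : Type*} [MeasurableSpace Ω] (P : Measure Ω) {d : ℕ}
    (B : ℝ → Ω → Fin d → ℝ) : Prop where
  init : ∀ ω, B 0 ω = 0
  cont : ∀ ω i, Continuous fun t => B t ω i
  meas : ∀ t, Measurable (B t)
  gauss : ∀ (v : Fin d → ℝ) (s t : ℝ), 0 ≤ s → s ≤ t →
    P.map (fun ω => ∑ i, v i * (B t ω i - B s ω i)) =
      gaussianReal 0 (((t - s) * ∑ i, v i ^ 2).toNNReal)
  indep : ∀ (v v' : Fin d → ℝ) (s t u r : ℝ), 0 ≤ s → s ≤ t → t ≤ u → u ≤ r →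
    IndepFun (fun ω => ∑ i, v i * (B t ω i - B s ω i))
      (fun ω => ∑ i, v' i * (B r ω i - B u ω i)) P

/-- **Exponential integrability of the squared drift along Brownian motion.**
With `b(t,y,ω) = b₁(t,y) + b₂(t,y,ω)`, `|b₁(t,y)| ≤ k(1+|y|)` and `|b₂| ≤ M₂(ω)`,
for every `a > 0` and `x ∈ ℝ`:
`E[exp(a ∫₀^T b(r, x+σ·B_r, ω)² dr)]
  ≤ exp(4ak²T(1+|x|)²) · E[exp(8ak²T sup_{0≤t≤T}|σ·B_t|²)]^{1/2} · E[exp(4aTM₂²)]^{1/2}`;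
in particular the left-hand side is finite provided `16ak²‖σ‖²T² < 1` and
`E[exp(4aTM₂²)] < ∞`. -/
theorem exp_integrability_squared_drift
    {Ω : Type*} [MeasurableSpace Ω] (P : Measure Ω) [IsProbabilityMeasure P]
    {d : ℕ} (B : ℝ → Ω → Fin d → ℝ) (hB : IsBrownianMotion P B)
    (σ : Fin d → ℝ) (hσ : 0 < ∑ i, σ i ^ 2)
    (T : ℝ) (hT : 0 < T) (k : ℝ) (hk : 0 ≤ k)
    (b₁ : ℝ → ℝ → ℝ) (hb₁meas : Measurable fun q : ℝ × ℝ => b₁ q.1 q.2)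
    (hb₁g : ∀ t ∈ Icc (0 : ℝ) T, ∀ y : ℝ, |b₁ t y| ≤ k * (1 + |y|))
    (b₂ : ℝ → ℝ → Ω → ℝ)
    (hb₂meas : Measurable fun q : ℝ × ℝ × Ω => b₂ q.1 q.2.1 q.2.2)
    (M₂ : Ω → ℝ) (hM₂ : Measurable M₂)
    (hb₂b : ∀ t ∈ Icc (0 : ℝ) T, ∀ (y : ℝ) (ω : Ω), |b₂ t y ω| ≤ M₂ ω)
    (a : ℝ) (ha : 0 < a) (x : ℝ) :
    (∫⁻ ω, ENNReal.ofReal (Real.exp (a *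
        ∫ r in (0 : ℝ)..T,
          (b₁ r (x + ∑ i, σ i * B r ω i) + b₂ r (x + ∑ i, σ i * B r ω i) ω) ^ 2)) ∂P ≤
      ENNReal.ofReal (Real.exp (4 * a * k ^ 2 * T * (1 + |x|) ^ 2)) *
        (∫⁻ ω, ENNReal.ofReal (Real.exp (8 * a * k ^ 2 * T *
          ⨆ t : Icc (0 : ℝ) T, |∑ i, σ i * B (t : ℝ) ω i| ^ 2)) ∂P) ^ ((1 : ℝ) / 2) *
        (∫⁻ ω, ENNReal.ofReal (Real.exp (4 * a * T * M₂ ω ^ 2)) ∂P) ^ ((1 : ℝ) / 2)) ∧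
    (16 * a * k ^ 2 * (∑ i, σ i ^ 2) * T ^ 2 < 1 →
      (∫⁻ ω, ENNReal.ofReal (Real.exp (4 * a * T * M₂ ω ^ 2)) ∂P) < ⊤ →
      (∫⁻ ω, ENNReal.ofReal (Real.exp (a *
        ∫ r in (0 : ℝ)..T,
          (b₁ r (x + ∑ i, σ i * B r ω i) + b₂ r (x + ∑ i, σ i * B r ω i) ω) ^ 2)) ∂P) < ⊤) := by
  have hfc : ∀ ω, Continuous fun t => ∑ i, σ i * B t ω i :=
    fun ω => continuous_finset_sum _ fun i _ => continuous_const.mul (hB.cont ω i)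
  have hfm : Measurable fun q : ℝ × Ω => ∑ i, σ i * B q.1 q.2 i := by
    have hu : Measurable (Function.uncurry B) :=
      measurable_uncurry_of_continuous_of_measurable
        (fun ω => continuous_pi fun i => hB.cont ω i) hB.meas
    exact Finset.measurable_sum _ fun i _ =>
      measurable_const.mul ((measurable_pi_apply i).comp hu)
  have hgauss : ∀ r : ℝ, 0 < r →
      P.map (fun ω => ∑ i, σ i * B r ω i)
        = gaussianReal 0 ((r * ∑ i, σ i ^ 2).toNNReal) := by
    intro r hr
    have h := hB.gauss σ 0 r le_rfl hr.le
    simpa [hB.init] using h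
  exact aux_main P (fun t ω => ∑ i, σ i * B t ω i) hfc hfm _ hσ hgauss T hT k hk
    b₁ hb₁meas hb₁g b₂ hb₂meas M₂ hM₂ hb₂b a ha x
end

section
/- Explicit derivative of the flow of an ODE with additive continuous forcing: Let 0 ≤ s ≤ T, let w : [0,T] → ℝ be continuous, and let f : [0,T]×ℝ → ℝ be continuous, continuously differentiable in the second variable, with ∂_y f bounded and continuous. Suppose that for each x ∈ ℝ, X^x : [s,T] → ℝ is the continuous function satisfying X^x_t = x + ∫_s^t f(u, X^x_u) du + w(t) − w(s) for all t ∈ [s,T]. Then for each t ∈ [s,T], the map x ↦ X^x_t is differentiable on ℝ and its derivative equals ∂_x X^x_t = exp( ∫_s^t ∂_y f(u, X^x_u) du ). -/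
open MeasureTheory Set

/-!
For two initial values `x, y` the forcing `w` cancels in `Z = X^y − X^x`, and the integral form
of the mean value theorem turns `f(u, X^y_u) − f(u, X^x_u)` into `g_y(u) Z_u`, where `g_y(u)` is
the average of `∂_y f(u, ·)` over the segment from `X^x_u` to `X^y_u`. So `Z` solves a linear
equation and `X^y_t − X^x_t = (y − x) exp(∫_s^t g_y)`: the difference quotient is exactly
`exp(∫_s^t g_y)`. As `|g_y| ≤ L := sup |∂_y f|`, the same formula gives
`|X^y_u − X^x_u| ≤ |y − x| e^{L(u−s)}`, hence `g_y → ∂_y f(·, X^x)` pointwise, and dominated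
convergence finishes the proof.
-/

open Filter Topology

noncomputable def avgDeriv (φ : ℝ → ℝ) (a b : ℝ) : ℝ :=
  ∫ θ in (0 : ℝ)..1, deriv φ (a + θ * (b - a))

theorem sub_eq_mul_avgDeriv {φ : ℝ → ℝ} (hφ : Differentiable ℝ φ) (hφ' : Continuous (deriv φ))
    (a b : ℝ) : φ b - φ a = (b - a) * avgDeriv φ a b := by
  have hsmul := intervalIntegral.smul_integral_comp_mul_add (a := 0) (b := 1) (deriv φ) (b - a) a
  simp only [mul_zero, mul_one, zero_add, sub_add_cancel, smul_eq_mul] at hsmul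
  rw [intervalIntegral.integral_deriv_eq_sub (fun y _ => hφ y) (hφ'.intervalIntegrable a b)]
    at hsmul
  rw [← hsmul, avgDeriv]
  simp only [add_comm a, mul_comm _ (b - a)]

theorem avgDeriv_self (φ : ℝ → ℝ) (a : ℝ) : avgDeriv φ a a = deriv φ a := by
  simp [avgDeriv]

theorem abs_avgDeriv_le {φ : ℝ → ℝ} {L : ℝ} (hL : ∀ y, |deriv φ y| ≤ L) (a b : ℝ) :
    |avgDeriv φ a b| ≤ L := by
  rw [avgDeriv]
  simpa using intervalIntegral.norm_integral_le_of_norm_le_const (a := 0) (b := 1) (C := L)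
    (f := fun θ => deriv φ (a + θ * (b - a))) fun θ _ => hL (a + θ * (b - a))

theorem continuous_avgDeriv {f : ℝ → ℝ → ℝ}
    (hf' : Continuous fun q : ℝ × ℝ => deriv (f q.1) q.2) :
    Continuous fun p : ℝ × ℝ × ℝ => avgDeriv (f p.1) p.2.1 p.2.2 :=
  intervalIntegral.continuous_parametric_intervalIntegral_of_continuous'
    (f := fun (p : ℝ × ℝ × ℝ) θ => deriv (f p.1) (p.2.1 + θ * (p.2.2 - p.2.1)))
    (hf'.comp (f := fun q : (ℝ × ℝ × ℝ) × ℝ => (q.1.1, q.1.2.1 + q.2 * (q.1.2.2 - q.1.2.1)))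
      (by fun_prop)) 0 1

theorem eq_mul_exp_integral_of_eq_add_integral_mul {g Z : ℝ → ℝ} {s T z₀ : ℝ}
    (hg : Continuous g) (hZ : Continuous Z)
    (hZeq : ∀ t ∈ Icc s T, Z t = z₀ + ∫ u in s..t, g u * Z u) :
    ∀ t ∈ Icc s T, Z t = z₀ * Real.exp (∫ u in s..t, g u) := by
  set G : ℝ → ℝ := fun r => ∫ u in s..r, g u
  set ψ : ℝ → ℝ := fun r => z₀ + ∫ u in s..r, g u * Z u
  have hG : ∀ r, HasDerivAt G (g r) r := fun r => (hg.integral_hasStrictDerivAt s r).hasDerivAt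
  have hψ : ∀ r, HasDerivAt ψ (g r * Z r) r := fun r =>
    ((hg.mul hZ).integral_hasStrictDerivAt s r).hasDerivAt.const_add z₀
  have hderiv : ∀ r, HasDerivAt (fun r => ψ r * Real.exp (-G r))
      (g r * Z r * Real.exp (-G r) + ψ r * (Real.exp (-G r) * -g r)) r := fun r =>
    (hψ r).mul (hG r).neg.exp
  have hconst : ∀ r ∈ Icc s T, ψ r * Real.exp (-G r) = ψ s * Real.exp (-G s) :=
    constant_of_has_deriv_right_zero
      (continuous_iff_continuousAt.mpr fun r => (hderiv r).continuousAt).continuousOn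
      fun r hr => by
        have hψZ : ψ r = Z r := (hZeq r (Ico_subset_Icc_self hr)).symm
        exact ((hderiv r).congr_deriv (by rw [hψZ]; ring)).hasDerivWithinAt
  intro t ht
  have hψt : ψ t * Real.exp (-G t) = z₀ := by simpa [ψ, G] using hconst t ht
  calc Z t = ψ t * Real.exp (-G t) * Real.exp (G t) := by
        rw [mul_assoc, ← Real.exp_add, neg_add_cancel, Real.exp_zero, mul_one, hZeq t ht]
    _ = z₀ * Real.exp (G t) := by rw [hψt]

def IsIntegralSolution (f : ℝ → ℝ → ℝ) (w : ℝ → ℝ) (s T x : ℝ) (X : ℝ → ℝ) : Prop :=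
  ∀ t ∈ Icc s T, X t = x + (∫ u in s..t, f u (X u)) + (w t - w s)

namespace IsIntegralSolution

variable {f : ℝ → ℝ → ℝ} {w : ℝ → ℝ} {s T : ℝ}

theorem congr {x : ℝ} {X Y : ℝ → ℝ} (hX : IsIntegralSolution f w s T x X)
    (hYX : EqOn Y X (Icc s T)) : IsIntegralSolution f w s T x Y := by
  intro t ht
  rw [hYX ht, hX t ht, intervalIntegral.integral_congr fun u hu =>
    congrArg (f u) (hYX (uIcc_subset_Icc (left_mem_Icc.2 (ht.1.trans ht.2)) ht hu)).symm]

theorem sub_eq_mul_exp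
    (hfcont : Continuous fun q : ℝ × ℝ => f q.1 q.2)
    (hfdiff : ∀ t y : ℝ, DifferentiableAt ℝ (f t) y)
    (hf'cont : Continuous fun q : ℝ × ℝ => deriv (f q.1) q.2)
    {x₁ x₂ : ℝ} {X₁ X₂ : ℝ → ℝ} (hX₁ : Continuous X₁) (hX₂ : Continuous X₂)
    (h₁ : IsIntegralSolution f w s T x₁ X₁) (h₂ : IsIntegralSolution f w s T x₂ X₂) :
    ∀ t ∈ Icc s T, X₂ t - X₁ t =
      (x₂ - x₁) * Real.exp (∫ u in s..t, avgDeriv (f u) (X₁ u) (X₂ u)) := by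
  have hg : Continuous fun u => avgDeriv (f u) (X₁ u) (X₂ u) :=
    (continuous_avgDeriv hf'cont).comp (continuous_id.prodMk (hX₁.prodMk hX₂))
  have hincr : ∀ u, f u (X₂ u) - f u (X₁ u) = avgDeriv (f u) (X₁ u) (X₂ u) * (X₂ u - X₁ u) :=
    fun u => by
      rw [sub_eq_mul_avgDeriv (hfdiff u) (hf'cont.comp (Continuous.prodMk_right u)), mul_comm]
  have hfX : ∀ {X : ℝ → ℝ}, Continuous X → ∀ t,
      IntervalIntegrable (fun u => f u (X u)) volume s t :=
    fun hX t => (hfcont.comp (continuous_id.prodMk hX)).intervalIntegrable _ _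
  refine eq_mul_exp_integral_of_eq_add_integral_mul hg (hX₂.sub hX₁) fun t ht => ?_
  simp only [← hincr, intervalIntegral.integral_sub (hfX hX₂ t) (hfX hX₁ t)]
  rw [h₁ t ht, h₂ t ht]
  ring

theorem abs_sub_le
    (hfcont : Continuous fun q : ℝ × ℝ => f q.1 q.2)
    (hfdiff : ∀ t y : ℝ, DifferentiableAt ℝ (f t) y)
    (hf'cont : Continuous fun q : ℝ × ℝ => deriv (f q.1) q.2)
    {L : ℝ} (hL : ∀ t y : ℝ, |deriv (f t) y| ≤ L)
    {x₁ x₂ : ℝ} {X₁ X₂ : ℝ → ℝ} (hX₁ : Continuous X₁) (hX₂ : Continuous X₂)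
    (h₁ : IsIntegralSolution f w s T x₁ X₁) (h₂ : IsIntegralSolution f w s T x₂ X₂) :
    ∀ t ∈ Icc s T, |X₂ t - X₁ t| ≤ |x₂ - x₁| * Real.exp (L * (t - s)) := by
  intro t ht
  rw [sub_eq_mul_exp hfcont hfdiff hf'cont hX₁ hX₂ h₁ h₂ t ht, abs_mul, Real.abs_exp]
  gcongr
  calc (∫ u in s..t, avgDeriv (f u) (X₁ u) (X₂ u))
      ≤ ‖∫ u in s..t, avgDeriv (f u) (X₁ u) (X₂ u)‖ := le_abs_self _
    _ ≤ L * |t - s| := intervalIntegral.norm_integral_le_of_norm_le_const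
        fun u _ => abs_avgDeriv_le (hL u) _ _
    _ = L * (t - s) := by rw [abs_of_nonneg (sub_nonneg.2 ht.1)]

end IsIntegralSolution

theorem tendsto_integral_avgDeriv {f : ℝ → ℝ → ℝ}
    (hf'cont : Continuous fun q : ℝ × ℝ => deriv (f q.1) q.2)
    {L : ℝ} (hL : ∀ t y : ℝ, |deriv (f t) y| ≤ L)
    {ι : Type*} {l : Filter ι} [l.IsCountablyGenerated] {a b : ℝ} {Y : ℝ → ℝ} {F : ι → ℝ → ℝ}
    (hY : Measurable Y) (hF : ∀ i, Measurable (F i))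
    (hlim : ∀ u ∈ uIoc a b, Tendsto (fun i => F i u) l (𝓝 (Y u))) :
    Tendsto (fun i => ∫ u in a..b, avgDeriv (f u) (Y u) (F i u)) l
      (𝓝 (∫ u in a..b, deriv (f u) (Y u))) := by
  refine intervalIntegral.tendsto_integral_filter_of_dominated_convergence (fun _ => L)
    (Eventually.of_forall fun i => ((continuous_avgDeriv hf'cont).measurable.comp
      (measurable_id.prodMk (hY.prodMk (hF i)))).aestronglyMeasurable)
    (Eventually.of_forall fun i => ae_of_all _ fun u _ => abs_avgDeriv_le (hL u) _ _)
    intervalIntegrable_const (ae_of_all _ fun u hu => ?_)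
  rw [← avgDeriv_self]
  exact ((continuous_avgDeriv hf'cont).tendsto (u, Y u, Y u)).comp
    (tendsto_const_nhds.prodMk_nhds (tendsto_const_nhds.prodMk_nhds (hlim u hu)))

theorem hasDerivAt_of_continuous_of_isIntegralSolution {f : ℝ → ℝ → ℝ} {w : ℝ → ℝ} {s T : ℝ}
    (hfcont : Continuous fun q : ℝ × ℝ => f q.1 q.2)
    (hfdiff : ∀ t y : ℝ, DifferentiableAt ℝ (f t) y)
    (hf'cont : Continuous fun q : ℝ × ℝ => deriv (f q.1) q.2)
    {L : ℝ} (hL : ∀ t y : ℝ, |deriv (f t) y| ≤ L)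
    {X : ℝ → ℝ → ℝ} (hX : ∀ x, Continuous (X x))
    (hXsol : ∀ x, IsIntegralSolution f w s T x (X x)) {t : ℝ} (ht : t ∈ Icc s T) (x : ℝ) :
    HasDerivAt (fun y => X y t) (Real.exp (∫ u in s..t, deriv (f u) (X x u))) x := by
  have hslope : ∀ y ≠ x, slope (fun y => X y t) x y =
      Real.exp (∫ u in s..t, avgDeriv (f u) (X x u) (X y u)) := fun y hy => by
    rw [slope_def_field, (hXsol x).sub_eq_mul_exp hfcont hfdiff hf'cont (hX x) (hX y) (hXsol y)
      t ht, mul_div_cancel_left₀ _ (sub_ne_zero.2 hy)]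
  have hconv : ∀ u ∈ Icc s T, Tendsto (fun y => X y u) (𝓝 x) (𝓝 (X x u)) := by
    intro u hu
    rw [tendsto_iff_norm_sub_tendsto_zero]
    refine squeeze_zero (fun _ => norm_nonneg _)
      (fun y => (hXsol x).abs_sub_le hfcont hfdiff hf'cont hL (hX x) (hX y) (hXsol y) u hu) ?_
    simpa using ((continuous_sub_right x).abs.tendsto x).mul_const (Real.exp (L * (u - s)))
  have hlim := tendsto_integral_avgDeriv hf'cont hL (l := 𝓝[≠] x) (a := s) (b := t)
    (hX x).measurable (fun y => (hX y).measurable) fun u hu =>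
      (hconv u (uIoc_subset_uIcc.trans (uIcc_subset_Icc (left_mem_Icc.2 (ht.1.trans ht.2)) ht)
        hu)).mono_left nhdsWithin_le_nhds
  rw [hasDerivAt_iff_tendsto_slope]
  exact ((Real.continuous_exp.tendsto _).comp hlim).congr'
    (eventually_nhdsWithin_of_forall fun y hy => (hslope y hy).symm)

theorem flow_derivative_ODE_general
    (T s : ℝ) (hsT : s ≤ T)
    (w : ℝ → ℝ)
    (f : ℝ → ℝ → ℝ)
    (hfcont : Continuous fun q : ℝ × ℝ => f q.1 q.2)
    (hfdiff : ∀ t y : ℝ, DifferentiableAt ℝ (f t) y)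
    (hf'cont : Continuous fun q : ℝ × ℝ => deriv (f q.1) q.2)
    (hf'bdd : ∃ L : ℝ, ∀ t y : ℝ, |deriv (f t) y| ≤ L)
    (X : ℝ → ℝ → ℝ)
    (hXcont : ∀ x : ℝ, ContinuousOn (X x) (Icc s T))
    (hXeq : ∀ x : ℝ, ∀ t ∈ Icc s T,
      X x t = x + (∫ u in s..t, f u (X x u)) + (w t - w s)) :
    ∀ t ∈ Icc s T, ∀ x : ℝ,
      HasDerivAt (fun y : ℝ => X y t)
        (Real.exp (∫ u in s..t, deriv (f u) (X x u))) x := by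
  obtain ⟨L, hL⟩ := hf'bdd
  intro t ht x
  set Y : ℝ → ℝ → ℝ := fun y => IccExtend hsT ((Icc s T).domRestrict (X y))
  have hYX : ∀ y, EqOn (Y y) (X y) (Icc s T) := fun y u hu => IccExtend_of_mem hsT _ hu
  have hderiv :=
    hasDerivAt_of_continuous_of_isIntegralSolution (X := Y) hfcont hfdiff hf'cont hL
    (fun y => continuous_IccExtend_iff.mpr (hXcont y).domRestrict)
    (fun y => IsIntegralSolution.congr (hXeq y) (hYX y)) ht x
  have hint : ∫ u in s..t, deriv (f u) (Y x u) = ∫ u in s..t, deriv (f u) (X x u) :=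
    intervalIntegral.integral_congr fun u hu =>
      congrArg (deriv (f u)) (hYX x (uIcc_subset_Icc (left_mem_Icc.2 hsT) ht hu))
  rwa [funext fun y => hYX y ht, hint] at hderiv

/-- **Explicit derivative of the flow of an ODE with additive continuous forcing.**
Let `f : [0,T]×ℝ → ℝ` be continuous, `C¹` in the second variable with bounded and
continuous partial derivative, `w` continuous, and for each `x` let `X^x` solve
`X^x_t = x + ∫_s^t f(u, X^x_u) du + w(t) − w(s)` on `[s,T]`. Then for each
`t ∈ [s,T]`, the map `x ↦ X^x_t` is differentiable with derivative
`exp(∫_s^t ∂_y f(u, X^x_u) du)`. -/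
theorem flow_derivative_ODE
    (T s : ℝ) (hs : 0 ≤ s) (hsT : s ≤ T)
    (w : ℝ → ℝ) (hw : Continuous w)
    (f : ℝ → ℝ → ℝ)
    (hfcont : Continuous fun q : ℝ × ℝ => f q.1 q.2)
    (hfdiff : ∀ t y : ℝ, DifferentiableAt ℝ (f t) y)
    (hf'cont : Continuous fun q : ℝ × ℝ => deriv (f q.1) q.2)
    (hf'bdd : ∃ L : ℝ, ∀ t y : ℝ, |deriv (f t) y| ≤ L)
    (X : ℝ → ℝ → ℝ)
    (hXcont : ∀ x : ℝ, ContinuousOn (X x) (Icc s T))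
    (hXeq : ∀ x : ℝ, ∀ t ∈ Icc s T,
      X x t = x + (∫ u in s..t, f u (X x u)) + (w t - w s)) :
    ∀ t ∈ Icc s T, ∀ x : ℝ,
      HasDerivAt (fun y : ℝ => X y t)
        (Real.exp (∫ u in s..t, deriv (f u) (X x u))) x :=
  flow_derivative_ODE_general T s hsT w f hfcont hfdiff hf'cont hf'bdd X hXcont hXeq
end
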